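/- arXiv:1111.4550 — 2 statements merged into one kernel-verified Lean document; each statement's English description precedes it below -/
import Mathlib

section
/- For the signal u(t) = cos^l(ωt) with odd l, the efficiency with respect to the frequency ω equals 9π/32 for l = 3 and 75π/256 for l = 5. -/
open MeasureTheory intervalIntegral

section aux
open Real

private lemma c4' : ∫ x in (0:ℝ)..(2*π), Real.cos x ^ 4 = 3*π/4 := by
  rw [show (4:ℕ) = 2+2 from rfl, integral_cos_pow]
  simp [Real.sin_two_pi, Real.cos_two_pi]
  ring

private lemma c6' : ∫ x in (0:ℝ)..(2*π), Real.cos x ^ 6 = 5*π/8 := by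
  have h := @integral_cos_pow 0 (2*π) 4
  norm_num [Real.sin_two_pi, Real.cos_two_pi, c4'] at h
  rw [h]; ring

private lemma cs3' : ∫ x in (0:ℝ)..(2*π), Real.sin x * Real.cos x ^ 3 = 0 := by
  have := @integral_sin_pow_odd_mul_cos_pow 0 (2*π) 0 3
  norm_num [Real.cos_two_pi] at this
  simpa using this

private lemma cs5' : ∫ x in (0:ℝ)..(2*π), Real.sin x * Real.cos x ^ 5 = 0 := by
  have := @integral_sin_pow_odd_mul_cos_pow 0 (2*π) 0 5
  norm_num [Real.cos_two_pi] at this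
  simpa using this

private lemma c5gen (a b : ℝ) : ∫ x in a..b, Real.cos x ^ 5 =
    (Real.sin b - 2*Real.sin b^3/3 + Real.sin b^5/5)
      - (Real.sin a - 2*Real.sin a^3/3 + Real.sin a^5/5) := by
  have := @integral_sin_pow_mul_cos_pow_odd a b 0 2
  norm_num at this
  rw [this]
  have h2 : ∀ u:ℝ, (1 - u^2)^2 = 1 - 2*u^2 + u^4 := fun u => by ring
  simp_rw [h2]
  rw [intervalIntegral.integral_add, intervalIntegral.integral_sub]
  · simp [integral_pow]; ring
  all_goals apply Continuous.intervalIntegrable; fun_prop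

private lemma sin3pi2 : Real.sin (3*π/2) = -1 := by
  rw [show (3*π/2) = π/2 + π by ring, Real.sin_add_pi]
  simp

private lemma cosnn1 : ∀ x ∈ Set.uIcc (0:ℝ) (π/2), 0 ≤ Real.cos x := by
  intro x hx
  rw [Set.uIcc_of_le (by positivity)] at hx
  exact Real.cos_nonneg_of_mem_Icc ⟨by linarith [hx.1, pi_pos], hx.2⟩

private lemma cosnp : ∀ x ∈ Set.uIcc (π/2) (3*π/2), Real.cos x ≤ 0 := by
  intro x hx
  rw [Set.uIcc_of_le (by linarith [pi_pos])] at hx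
  exact Real.cos_nonpos_of_pi_div_two_le_of_le hx.1 (by linarith [hx.2])

private lemma cosnn2 : ∀ x ∈ Set.uIcc (3*π/2) (2*π), 0 ≤ Real.cos x := by
  intro x hx
  rw [Set.uIcc_of_le (by linarith [pi_pos])] at hx
  rw [← Real.cos_sub_two_pi]
  exact Real.cos_nonneg_of_mem_Icc ⟨by linarith [hx.1], by linarith [hx.2, pi_pos]⟩

private lemma abs_split {A B C : ℝ} (l : ℕ) (hl : Odd l)
    (h1 : ∫ x in (0:ℝ)..(π/2), Real.cos x ^ l = A)
    (h2 : ∫ x in (π/2)..(3*π/2), Real.cos x ^ l = B)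
    (h3 : ∫ x in (3*π/2)..(2*π), Real.cos x ^ l = C) :
    ∫ x in (0:ℝ)..(2*π), |Real.cos x ^ l| = A - B + C := by
  have hc : ∀ a b : ℝ, IntervalIntegrable (fun x => |Real.cos x ^ l|) volume a b := by
    intro a b; apply Continuous.intervalIntegrable; fun_prop
  rw [← integral_add_adjacent_intervals (b := π/2) (hc _ _) (hc _ _),
      ← integral_add_adjacent_intervals (a := π/2) (b := 3*π/2) (hc _ _) (hc _ _)]
  have e1 : ∫ x in (0:ℝ)..(π/2), |Real.cos x ^ l| = A := by
    rw [← h1]; apply integral_congr; intro x hx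
    exact abs_of_nonneg (pow_nonneg (cosnn1 x hx) l)
  have e2 : ∫ x in (π/2)..(3*π/2), |Real.cos x ^ l| = -B := by
    rw [← h2, ← intervalIntegral.integral_neg]; apply integral_congr; intro x hx
    exact abs_of_nonpos (hl.pow_nonpos (cosnp x hx))
  have e3 : ∫ x in (3*π/2)..(2*π), |Real.cos x ^ l| = C := by
    rw [← h3]; apply integral_congr; intro x hx
    exact abs_of_nonneg (pow_nonneg (cosnn2 x hx) l)
  rw [e1, e2, e3]; ring

private lemma abs3 : ∫ x in (0:ℝ)..(2*π), |Real.cos x ^ 3| = 8/3 := by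
  have h := abs_split 3 ⟨1, by norm_num⟩
    (A := 2/3) (B := -(4/3)) (C := 2/3) ?_ ?_ ?_
  · rw [h]; norm_num
  all_goals rw [integral_cos_pow_three]; norm_num [sin3pi2, Real.sin_two_pi]; try ring

private lemma abs5 : ∫ x in (0:ℝ)..(2*π), |Real.cos x ^ 5| = 32/15 := by
  have h := abs_split 5 ⟨2, by norm_num⟩
    (A := 8/15) (B := -(16/15)) (C := 8/15) ?_ ?_ ?_
  · rw [h]; norm_num
  all_goals rw [c5gen]; norm_num [sin3pi2, Real.sin_two_pi]; try ring

private lemma cexp (l : ℕ) : ∫ s in (0:ℝ)..(2*π), (Real.cos s:ℂ)^l * Complex.exp (Complex.I * s)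
    = ↑(∫ s in (0:ℝ)..(2*π), Real.cos s^(l+1))
      + ↑(∫ s in (0:ℝ)..(2*π), Real.sin s * Real.cos s^l) * Complex.I := by
  have key : ∀ s:ℝ, (Real.cos s:ℂ)^l * Complex.exp (Complex.I * s)
      = ↑(Real.cos s^(l+1)) + ↑(Real.sin s * Real.cos s^l) * Complex.I := by
    intro s
    rw [mul_comm Complex.I, Complex.exp_mul_I, ← Complex.ofReal_cos, ← Complex.ofReal_sin]
    push_cast
    ring
  simp_rw [key]
  rw [intervalIntegral.integral_add, intervalIntegral.integral_mul_const,
    intervalIntegral.integral_ofReal, intervalIntegral.integral_ofReal]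
  · apply Continuous.intervalIntegrable; fun_prop
  · apply Continuous.intervalIntegrable; fun_prop

end aux

/-- The efficiency of `cos³(ωt)` with respect to frequency ω equals 9π/32,
and that of `cos⁵(ωt)` equals 75π/256. -/
theorem stmt10 (ω : ℝ) (hω : 0 < ω) (T : ℝ) (hT : T = 2 * Real.pi / ω) :
    ‖∫ τ in (0:ℝ)..T, (Real.cos (ω * τ) : ℂ) ^ 3 * Complex.exp (Complex.I * (ω * τ))‖ /
      ∫ τ in (0:ℝ)..T, |Real.cos (ω * τ) ^ 3| = 9 * Real.pi / 32 ∧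
    ‖∫ τ in (0:ℝ)..T, (Real.cos (ω * τ) : ℂ) ^ 5 * Complex.exp (Complex.I * (ω * τ))‖ /
      ∫ τ in (0:ℝ)..T, |Real.cos (ω * τ) ^ 5| = 75 * Real.pi / 256 := by
  have hω' : ω ≠ 0 := hω.ne'
  have hωT : ω * T = 2 * Real.pi := by rw [hT]; field_simp
  have hnum : ∀ l : ℕ, (∫ τ in (0:ℝ)..T, (Real.cos (ω * τ) : ℂ) ^ l
        * Complex.exp (Complex.I * (ω * τ)))
      = (ω⁻¹ : ℝ) • ∫ s in (0:ℝ)..(2*Real.pi), (Real.cos s:ℂ)^l * Complex.exp (Complex.I * s) := by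
    intro l
    have h1 : (∫ τ in (0:ℝ)..T, (Real.cos (ω * τ) : ℂ) ^ l * Complex.exp (Complex.I * (ω * τ)))
        = ∫ τ in (0:ℝ)..T,
            (fun s : ℝ => (Real.cos s:ℂ)^l * Complex.exp (Complex.I * s)) (ω * τ) := by
      refine intervalIntegral.integral_congr fun τ _ => ?_
      push_cast
      ring_nf
    have h2 := intervalIntegral.integral_comp_mul_left (a := (0:ℝ)) (b := T)
      (fun s : ℝ => (Real.cos s:ℂ)^l * Complex.exp (Complex.I * s)) hω'
    rw [h1, h2, mul_zero, hωT]
  have hden : ∀ l : ℕ, (∫ τ in (0:ℝ)..T, |Real.cos (ω * τ) ^ l|)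
      = ω⁻¹ * ∫ s in (0:ℝ)..(2*Real.pi), |Real.cos s ^ l| := by
    intro l
    have h1 : (∫ τ in (0:ℝ)..T, |Real.cos (ω * τ) ^ l|)
        = ∫ τ in (0:ℝ)..T, (fun s : ℝ => |Real.cos s ^ l|) (ω * τ) := rfl
    have h2 := intervalIntegral.integral_comp_mul_left (a := (0:ℝ)) (b := T)
      (fun s : ℝ => |Real.cos s ^ l|) hω'
    rw [h1, h2, mul_zero, hωT, smul_eq_mul]
  constructor
  · rw [hnum 3, hden 3, abs3, cexp 3]
    norm_num [c4', cs3', norm_smul, abs_of_pos hω, abs_of_pos Real.pi_pos]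
    field_simp
    ring
  · rw [hnum 5, hden 5, abs5, cexp 5]
    norm_num [c6', cs5', norm_smul, abs_of_pos hω, abs_of_pos Real.pi_pos]
    field_simp
    ring
end

section
/- (Tridiagonal growth bound for transition amplitudes.) Consider the bilinear system ψ' = (A + u(t)B)ψ where A is skew-adjoint diagonal and B is skew-adjoint and tridiagonal with respect to the eigenbasis (φ_k)_{k≥1} of A (i.e. ⟨φ_j, Bφ_k⟩ = 0 if |j−k| > 1) with |⟨φ_j, Bφ_k⟩| ≤ 1/2 for all j,k. Then for every locally integrable control u and every t ≥ 0 and k ≥ 1, |⟨φ_{k+1}, Υ^u_t φ_1⟩| ≤ (1/k!)(∫₀^t |u(τ)|dτ)^k. -/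
/-!
Write `x k t = ⟪φ k, ψ t⟫`. The generator `A + u B` is skew-adjoint, so `‖ψ t‖ = 1` and
`‖x k t‖ ≤ 1`. As `A` is diagonal and `B` tridiagonal with purely imaginary diagonal,
`d/dt ‖x (k+1)‖ ≤ |u| (‖x k‖ + ‖x (k+2)‖) / 2`. Since `x (k+1) 0 = 0`, induction on `n` gives
`‖x k t‖ ≤ U t ^ n / n!` for all `k ≥ n`, where `U t = ∫₀ᵗ |u|`, using
`∫₀ᵗ |u| Uⁿ = U t ^ (n+1) / (n+1)` (`U` is absolutely continuous).
-/

open MeasureTheory intervalIntegral Set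
open scoped InnerProductSpace RealInnerProductSpace ComplexConjugate

section ComplexHilbertSpace

variable {H : Type*} [NormedAddCommGroup H] [InnerProductSpace ℂ H]

theorem re_inner_eq_zero_of_inner_eq_neg {v w : H} (h : ⟪v, w⟫_ℂ = -⟪w, v⟫_ℂ) :
    (⟪v, w⟫_ℂ).re = 0 := by
  have hsymm : (⟪w, v⟫_ℂ).re = (⟪v, w⟫_ℂ).re := by rw [← inner_conj_symm, Complex.conj_re]
  have := congrArg Complex.re h
  rw [Complex.neg_re, hsymm] at this
  linarith

theorem Complex.real_inner_mul_self_eq_zero {c : ℂ} (hc : c.re = 0) (z : ℂ) :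
    ⟪z, c * z⟫_ℝ = 0 := by
  rw [Complex.inner, mul_assoc, Complex.mul_conj, Complex.re_mul_ofReal, hc, zero_mul]

theorem norm_eq_of_re_inner_deriv_eq_zero {ψ ψ' : ℝ → H} (hψ : ∀ t, HasDerivAt ψ (ψ' t) t)
    (h : ∀ t, (⟪ψ t, ψ' t⟫_ℂ).re = 0) (s t : ℝ) : ‖ψ t‖ = ‖ψ s‖ := by
  let _ := InnerProductSpace.rclikeToReal ℂ H
  have hderiv : ∀ t, HasDerivAt (‖ψ ·‖ ^ 2) 0 t := fun t => by
    simpa [real_inner_eq_re_inner, h t] using (hψ t).norm_sq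
  have := is_const_of_deriv_eq_zero (fun t => (hderiv t).differentiableAt)
    (fun t => (hderiv t).deriv) t s
  exact (pow_left_inj₀ (norm_nonneg _) (norm_nonneg _) two_ne_zero).1 this

variable [CompleteSpace H]

theorem ContinuousLinearMap.inner_apply_eq_neg_of_adjoint_eq_neg
    {B : H →L[ℂ] H} (hB : B.adjoint = -B) (v w : H) : ⟪v, B w⟫_ℂ = -⟪B v, w⟫_ℂ := by
  rw [← adjoint_inner_left, hB, neg_apply, inner_neg_left]

theorem LinearPMap.inner_apply_eq_neg_of_adjoint_eq_neg {A : H →ₗ.[ℂ] H}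
    (hdense : Dense (A.domain : Set H)) (hA : A.adjoint = -A) (v w : A.domain) :
    ⟪(v : H), A w⟫_ℂ = -⟪A v, (w : H)⟫_ℂ := by
  have h : (-A).IsFormalAdjoint A := hA ▸ A.adjoint_isFormalAdjoint hdense
  rw [← h v w, LinearPMap.neg_apply, inner_neg_left]

theorem ContinuousLinearMap.re_inner_apply_self_eq_zero {B : H →L[ℂ] H}
    (hB : B.adjoint = -B) (v : H) : (⟪v, B v⟫_ℂ).re = 0 :=
  re_inner_eq_zero_of_inner_eq_neg (B.inner_apply_eq_neg_of_adjoint_eq_neg hB v v)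

theorem LinearPMap.re_inner_apply_self_eq_zero {A : H →ₗ.[ℂ] H}
    (hdense : Dense (A.domain : Set H)) (hA : A.adjoint = -A) (v : A.domain) :
    (⟪(v : H), A v⟫_ℂ).re = 0 :=
  re_inner_eq_zero_of_inner_eq_neg (A.inner_apply_eq_neg_of_adjoint_eq_neg hdense hA v v)

theorem LinearPMap.inner_eigenvector_apply {A : H →ₗ.[ℂ] H}
    (hdense : Dense (A.domain : Set H)) (hA : A.adjoint = -A) {e : H} (he : e ∈ A.domain)
    {μ : ℂ} (hAe : A ⟨e, he⟩ = μ • e) (v : A.domain) :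
    ⟪e, A v⟫_ℂ = -conj μ * ⟪e, (v : H)⟫_ℂ := by
  rw [A.inner_apply_eq_neg_of_adjoint_eq_neg hdense hA ⟨e, he⟩ v, hAe, inner_smul_left, neg_mul]

theorem HilbertBasis.inner_apply_eq_tsum (φ : HilbertBasis ℕ ℂ H) (B : H →L[ℂ] H) (k : ℕ)
    (v : H) : ⟪(φ k : H), B v⟫_ℂ = ∑' j, ⟪(φ k : H), B (φ j)⟫_ℂ * ⟪(φ j : H), v⟫_ℂ := by
  simp only [← ContinuousLinearMap.adjoint_inner_left B]
  exact (φ.tsum_inner_mul_inner _ _).symm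

theorem HilbertBasis.inner_apply_eq_of_tridiagonal (φ : HilbertBasis ℕ ℂ H) {B : H →L[ℂ] H}
    (htri : ∀ j k : ℕ, 1 < |(j:ℤ) - k| → ⟪(φ j : H), B (φ k)⟫_ℂ = 0) (k : ℕ) (v : H) :
    ⟪(φ (k + 1) : H), B v⟫_ℂ = ⟪(φ (k + 1) : H), B (φ k)⟫_ℂ * ⟪(φ k : H), v⟫_ℂ
      + ⟪(φ (k + 1) : H), B (φ (k + 1))⟫_ℂ * ⟪(φ (k + 1) : H), v⟫_ℂ
      + ⟪(φ (k + 1) : H), B (φ (k + 2))⟫_ℂ * ⟪(φ (k + 2) : H), v⟫_ℂ := by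
  rw [φ.inner_apply_eq_tsum, tsum_eq_sum (s := {k, k + 1, k + 2})]
  · rw [Finset.sum_insert (by simp), Finset.sum_insert (by simp), Finset.sum_singleton, add_assoc]
  · intro j hj
    simp only [Finset.mem_insert, Finset.mem_singleton, not_or] at hj
    rw [htri _ _ (by rw [lt_abs]; omega), zero_mul]

/-- The diagonal entry drops out because a skew-adjoint operator has purely imaginary diagonal. -/
theorem HilbertBasis.abs_real_inner_inner_apply_le_of_tridiagonal (φ : HilbertBasis ℕ ℂ H)
    {B : H →L[ℂ] H} (hB : B.adjoint = -B)
    (htri : ∀ j k : ℕ, 1 < |(j:ℤ) - k| → ⟪(φ j : H), B (φ k)⟫_ℂ = 0)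
    (hhalf : ∀ j k : ℕ, ‖⟪(φ j : H), B (φ k)⟫_ℂ‖ ≤ 1 / 2) (k : ℕ) (v : H) :
    |⟪⟪(φ (k + 1) : H), v⟫_ℂ, ⟪(φ (k + 1) : H), B v⟫_ℂ⟫_ℝ|
      ≤ ‖⟪(φ (k + 1) : H), v⟫_ℂ‖ * ((‖⟪(φ k : H), v⟫_ℂ‖ + ‖⟪(φ (k + 2) : H), v⟫_ℂ‖) / 2) := by
  set z := ⟪(φ (k + 1) : H), v⟫_ℂ
  have hdiag := B.re_inner_apply_self_eq_zero hB (φ (k + 1))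
  have hoff : ∀ j, |⟪z, ⟪(φ (k + 1) : H), B (φ j)⟫_ℂ * ⟪(φ j : H), v⟫_ℂ⟫_ℝ|
      ≤ ‖z‖ * ‖⟪(φ j : H), v⟫_ℂ‖ / 2 := fun j => by
    refine (abs_real_inner_le_norm _ _).trans ?_
    rw [norm_mul, mul_div_assoc]
    gcongr
    linarith [mul_le_mul_of_nonneg_right (hhalf (k + 1) j) (norm_nonneg ⟪(φ j : H), v⟫_ℂ)]
  rw [φ.inner_apply_eq_of_tridiagonal htri, inner_add_right, inner_add_right,
    Complex.real_inner_mul_self_eq_zero hdiag, add_zero]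
  linarith [abs_add_le (⟪z, ⟪(φ (k + 1) : H), B (φ k)⟫_ℂ * ⟪(φ k : H), v⟫_ℂ⟫_ℝ)
    (⟪z, ⟪(φ (k + 1) : H), B (φ (k + 2))⟫_ℂ * ⟪(φ (k + 2) : H), v⟫_ℂ⟫_ℝ), hoff k, hoff (k + 2)]

theorem HilbertBasis.real_inner_inner_generator_le (φ : HilbertBasis ℕ ℂ H) {A : H →ₗ.[ℂ] H}
    (hdense : Dense (A.domain : Set H)) (hA : A.adjoint = -A) {B : H →L[ℂ] H}
    (hB : B.adjoint = -B) (htri : ∀ j k : ℕ, 1 < |(j:ℤ) - k| → ⟪(φ j : H), B (φ k)⟫_ℂ = 0)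
    (hhalf : ∀ j k : ℕ, ‖⟪(φ j : H), B (φ k)⟫_ℂ‖ ≤ 1 / 2) {k : ℕ}
    (hmem : (φ (k + 1) : H) ∈ A.domain) {μ : ℂ} (hμ : μ.re = 0)
    (hAφ : A ⟨φ (k + 1), hmem⟩ = μ • (φ (k + 1) : H)) (v : A.domain) (s : ℝ) :
    ⟪⟪(φ (k + 1) : H), v⟫_ℂ, ⟪(φ (k + 1) : H), A v + s • B v⟫_ℂ⟫_ℝ
      ≤ ‖⟪(φ (k + 1) : H), (v : H)⟫_ℂ‖
        * (|s| * ((‖⟪(φ k : H), (v : H)⟫_ℂ‖ + ‖⟪(φ (k + 2) : H), (v : H)⟫_ℂ‖) / 2)) := by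
  rw [inner_add_right, A.inner_eigenvector_apply hdense hA hmem hAφ, inner_add_right,
    Complex.real_inner_mul_self_eq_zero (by simp [hμ]), zero_add, inner_smul_right_eq_smul,
    real_inner_smul_right]
  calc s * _ ≤ |s| * |⟪⟪(φ (k + 1) : H), (v : H)⟫_ℂ, ⟪(φ (k + 1) : H), B v⟫_ℂ⟫_ℝ| :=
        (le_abs_self _).trans (abs_mul _ _).le
    _ ≤ |s| * (‖⟪(φ (k + 1) : H), (v : H)⟫_ℂ‖
          * ((‖⟪(φ k : H), (v : H)⟫_ℂ‖ + ‖⟪(φ (k + 2) : H), (v : H)⟫_ℂ‖) / 2)) := by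
        gcongr
        exact φ.abs_real_inner_inner_apply_le_of_tridiagonal hB htri hhalf k v
    _ = _ := by ring

end ComplexHilbertSpace

theorem AbsolutelyContinuousOnInterval.fun_pow_succ {f : ℝ → ℝ} {a b : ℝ}
    (hf : AbsolutelyContinuousOnInterval f a b) (n : ℕ) :
    AbsolutelyContinuousOnInterval (fun x => f x ^ (n + 1)) a b := by
  induction n with
  | zero => simpa using hf
  | succ n ih => simpa only [pow_succ] using ih.fun_mul hf

theorem integral_mul_primitive_pow {w : ℝ → ℝ} {a b : ℝ} (hw : IntervalIntegrable w volume a b)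
    (n : ℕ) :
    ∫ x in a..b, w x * (∫ t in a..x, w t) ^ n = (∫ t in a..b, w t) ^ (n + 1) / (n + 1) := by
  set U : ℝ → ℝ := fun x => ∫ t in a..x, w t
  have hU : AbsolutelyContinuousOnInterval (fun x => U x ^ (n + 1)) a b :=
    (hw.absolutelyContinuousOnInterval_intervalIntegral (c := a) (by simp)).fun_pow_succ n
  have hderiv : ∀ᵐ x, x ∈ uIoc a b →
      deriv (fun x => U x ^ (n + 1)) x = (n + 1) * (w x * U x ^ n) := by
    filter_upwards [hw.ae_hasDerivAt_integral] with x hx hxab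
    rw [((hx (uIoc_subset_uIcc hxab) a left_mem_uIcc).fun_pow (n + 1)).deriv]
    push_cast; ring
  rw [eq_div_iff (by positivity), mul_comm, ← intervalIntegral.integral_const_mul,
    ← integral_congr_ae hderiv, hU.integral_deriv_eq_sub]
  simp [U]

theorem norm_le_norm_add_integral_of_inner_deriv_le {E : Type*} [NormedAddCommGroup E]
    [InnerProductSpace ℝ E] {x x' : ℝ → E} {G : ℝ → ℝ} {a b : ℝ} (hab : a ≤ b)
    (hx_cont : ContinuousOn x (Icc a b)) (hx : ∀ τ ∈ Ioo a b, HasDerivAt x (x' τ) τ)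
    (hG : IntervalIntegrable G volume a b) (hG0 : ∀ τ ∈ Ioo a b, 0 ≤ G τ)
    (hbound : ∀ τ ∈ Ioo a b, ⟪x τ, x' τ⟫ ≤ ‖x τ‖ * G τ) :
    ‖x b‖ ≤ ‖x a‖ + ∫ τ in a..b, G τ := by
  refine le_of_forall_pos_le_add fun ε hε => ?_
  -- `‖x‖` need not be differentiable where `x` vanishes; its regularization `f` is.
  set f : ℝ → ℝ := fun τ => √(‖x τ‖ ^ 2 + ε ^ 2)
  have hf_pos : ∀ τ, 0 < f τ := fun τ => Real.sqrt_pos.2 (by positivity)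
  have hnorm_le_f : ∀ τ, ‖x τ‖ ≤ f τ := fun τ =>
    Real.le_sqrt_of_sq_le (le_add_of_nonneg_right (sq_nonneg ε))
  have hf_deriv : ∀ τ ∈ Ioo a b, HasDerivAt f (⟪x τ, x' τ⟫ / f τ) τ := by
    intro τ hτ
    convert (((hx τ hτ).norm_sq).add_const (ε ^ 2)).sqrt (by positivity) using 1
    have := (hf_pos τ).ne'
    simp only [f] at this ⊢
    field_simp
  have hf_deriv_le : ∀ τ ∈ Ioo a b, ⟪x τ, x' τ⟫ / f τ ≤ G τ := fun τ hτ =>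
    (div_le_iff₀ (hf_pos τ)).2 <| (hbound τ hτ).trans <| by
      rw [mul_comm]; exact mul_le_mul_of_nonneg_left (hnorm_le_f τ) (hG0 τ hτ)
  have hFTC := sub_le_integral_of_hasDeriv_right_of_le (g := f) hab
    (((hx_cont.norm.pow 2).add continuousOn_const).sqrt)
    (fun τ hτ => (hf_deriv τ hτ).hasDerivWithinAt)
    ((intervalIntegrable_iff_integrableOn_Icc_of_le hab).1 hG) hf_deriv_le
  have hf_a : f a ≤ ‖x a‖ + ε :=
    Real.sqrt_le_iff.2 ⟨by positivity, by nlinarith [norm_nonneg (x a)]⟩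
  linarith [hnorm_le_f b]

open scoped Nat in
theorem norm_le_pow_div_factorial_of_chain {E : Type*} [NormedAddCommGroup E]
    [InnerProductSpace ℝ E] {x x' : ℕ → ℝ → E} {w : ℝ → ℝ}
    (hw : ∀ t, IntervalIntegrable w volume 0 t) (hw0 : ∀ t, 0 ≤ w t)
    (hx : ∀ k t, HasDerivAt (x k) (x' k t) t) (hx_le : ∀ k t, ‖x k t‖ ≤ 1)
    (hx0 : ∀ k, x (k + 1) 0 = 0)
    (hchain : ∀ k t, ⟪x (k + 1) t, x' (k + 1) t⟫
      ≤ ‖x (k + 1) t‖ * (w t * ((‖x k t‖ + ‖x (k + 2) t‖) / 2)))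
    {t : ℝ} (ht : 0 ≤ t) (k : ℕ) :
    ‖x k t‖ ≤ (∫ τ in 0..t, w τ) ^ k / k ! := by
  set U : ℝ → ℝ := fun t => ∫ τ in 0..t, w τ
  have hU_cont : Continuous U := continuous_primitive (fun a b => (hw a).symm.trans (hw b)) 0
  have hU_nonneg : ∀ τ, 0 ≤ τ → 0 ≤ U τ := fun τ hτ => integral_nonneg hτ fun s _ => hw0 s
  suffices ∀ n k, n ≤ k → ∀ t, 0 ≤ t → ‖x k t‖ ≤ U t ^ n / n ! from this k k le_rfl t ht
  intro n
  induction n with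
  | zero => intro k _ t _; simpa using hx_le k t
  | succ n ih =>
    rintro (_ | k) hk t ht
    · omega
    have hG : IntervalIntegrable (fun τ => w τ * (U τ ^ n / n !)) volume 0 t :=
      (hw t).mul_continuousOn ((hU_cont.pow n).div_const _).continuousOn
    have hbound : ∀ τ ∈ Ioo 0 t,
        ⟪x (k + 1) τ, x' (k + 1) τ⟫ ≤ ‖x (k + 1) τ‖ * (w τ * (U τ ^ n / n !)) :=
      fun τ hτ => (hchain k τ).trans <| by
        have := ih k (by omega) τ hτ.1.le
        have := ih (k + 2) (by omega) τ hτ.1.le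
        exact mul_le_mul_of_nonneg_left (mul_le_mul_of_nonneg_left (by linarith) (hw0 τ))
          (norm_nonneg _)
    calc ‖x (k + 1) t‖ ≤ ‖x (k + 1) 0‖ + ∫ τ in 0..t, w τ * (U τ ^ n / n !) :=
          norm_le_norm_add_integral_of_inner_deriv_le ht
            (fun τ _ => (hx (k + 1) τ).continuousAt.continuousWithinAt) (fun τ _ => hx (k + 1) τ)
            hG (fun τ hτ => by have := hU_nonneg τ hτ.1.le; have := hw0 τ; positivity) hbound
      _ = U t ^ (n + 1) / (n + 1)! := by
          rw [hx0, norm_zero, zero_add]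
          simp_rw [← mul_div_assoc]
          rw [intervalIntegral.integral_div, integral_mul_primitive_pow (hw t), Nat.factorial_succ,
            Nat.cast_mul, Nat.cast_succ, div_div]

/-- Tridiagonal growth bound: if A is skew-adjoint diagonal in the basis (φ_k) and B is
skew-adjoint, tridiagonal with entries of modulus ≤ 1/2, then the transition amplitude
from level 1 to level k+1 satisfies |⟨φ_{k+1}, Υ^u_t φ_1⟩| ≤ (∫₀^t|u|)^k / k!
(0-based indexing: `φ 0` is the first eigenvector φ_1). -/
theorem stmt16 {H : Type*} [NormedAddCommGroup H] [InnerProductSpace ℂ H] [CompleteSpace H]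
    (A : H →ₗ.[ℂ] H) (hdense : Dense (A.domain : Set H)) (hAskew : A.adjoint = -A)
    (φ : HilbertBasis ℕ ℂ H) (lam : ℕ → ℝ)
    (hmem : ∀ k, (φ k : H) ∈ A.domain)
    (hAφ : ∀ k, A ⟨φ k, hmem k⟩ = (-(lam k : ℂ) * Complex.I) • (φ k : H))
    (B : H →L[ℂ] H) (hBskew : ContinuousLinearMap.adjoint B = -B)
    (htri : ∀ j k : ℕ, 1 < |(j:ℤ) - k| → ⟪(φ j : H), B (φ k)⟫_ℂ = 0)
    (hhalf : ∀ j k : ℕ, ‖⟪(φ j : H), B (φ k)⟫_ℂ‖ ≤ 1 / 2)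
    (u : ℝ → ℝ) (hu : ∀ t : ℝ, IntervalIntegrable u volume 0 t)
    (ψ : ℝ → H) (hinit : ψ 0 = φ 0)
    (hmemψ : ∀ t, ψ t ∈ A.domain)
    (hode : ∀ t, HasDerivAt ψ (A ⟨ψ t, hmemψ t⟩ + u t • B (ψ t)) t) :
    ∀ t : ℝ, 0 ≤ t → ∀ k : ℕ,
      ‖⟪(φ k : H), ψ t⟫_ℂ‖ ≤ (1 / (Nat.factorial k : ℝ)) * (∫ τ in (0:ℝ)..t, |u τ|) ^ k := by
  intro t ht k
  have hskew : ∀ t, (⟪ψ t, A ⟨ψ t, hmemψ t⟩ + u t • B (ψ t)⟫_ℂ).re = 0 := fun t => by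
    rw [inner_add_right, Complex.add_re, inner_smul_right_eq_smul, Complex.smul_re,
      A.re_inner_apply_self_eq_zero hdense hAskew ⟨ψ t, hmemψ t⟩,
      B.re_inner_apply_self_eq_zero hBskew, smul_zero, add_zero]
  have hψ_norm : ∀ t, ‖ψ t‖ = 1 := fun t => by
    rw [norm_eq_of_re_inner_deriv_eq_zero hode hskew 0 t, hinit, φ.orthonormal.1 0]
  have hx_le : ∀ k t, ‖⟪(φ k : H), ψ t⟫_ℂ‖ ≤ 1 := fun k t => by
    simpa [φ.orthonormal.1 k, hψ_norm t] using norm_inner_le_norm (𝕜 := ℂ) (φ k : H) (ψ t)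
  have hx0 : ∀ k, ⟪(φ (k + 1) : H), ψ 0⟫_ℂ = 0 := fun k => by
    rw [hinit]; exact φ.orthonormal.2 (by omega)
  have hx : ∀ k t, HasDerivAt (fun t => ⟪(φ k : H), ψ t⟫_ℂ)
      ⟪(φ k : H), A ⟨ψ t, hmemψ t⟩ + u t • B (ψ t)⟫_ℂ t := fun k t => by
    simpa only [inner_zero_left, add_zero] using (hasDerivAt_const t (φ k : H)).inner ℂ (hode t)
  rw [one_div_mul_eq_div]
  exact norm_le_pow_div_factorial_of_chain (fun t => (hu t).abs) (fun t => abs_nonneg (u t)) hx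
    hx_le hx0 (fun k t => φ.real_inner_inner_generator_le hdense hAskew hBskew htri hhalf
      (hmem (k + 1)) (by simp) (hAφ (k + 1)) ⟨ψ t, hmemψ t⟩ (u t)) ht k
end
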